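/- Let 𝒜 ∈ ℝ^{n×n}, 𝒩_1,…,𝒩_m ∈ ℝ^{n×n} and X ∈ ℝ^{n×q} be partitioned into blocks 𝒜 = [𝒜₁₁ 𝒜₁₂; 𝒜₂₁ 𝒜₂₂], 𝒩_k = [𝒩_{k,11} 𝒩_{k,12}; 𝒩_{k,21} 𝒩_{k,22}], X = [X₁; X₂] with 𝒜₁₁, 𝒩_{k,11} ∈ ℝ^{r×r}, and let Θ = diag(Θ₁, Θ₂) be block-diagonal with symmetric positive semidefinite blocks Θ₁ ∈ ℝ^{r×r} and Θ₂ ∈ ℝ^{(n−r)×(n−r)}, and γ > 0. If 𝒜 Θ + Θ 𝒜^⊤ + γ^{-2} Σ_{k=1}^m 𝒩_k Θ 𝒩_k^⊤ = −X X^⊤, then the truncated blocks satisfy the inequality 𝒜₁₁ Θ₁ + Θ₁ 𝒜₁₁^⊤ + γ^{-2} Σ_{k=1}^m 𝒩_{k,11} Θ₁ 𝒩_{k,11}^⊤ ≤ −X₁ X₁^⊤ in the positive semidefinite order. -/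

import Mathlib

open Matrix

/-!
The `(1,1)` block of the full equation reads
`𝒜₁₁ Θ₁ + Θ₁ 𝒜₁₁ᵀ + γ⁻² ∑ₖ (𝒩_{k,11} Θ₁ 𝒩_{k,11}ᵀ + 𝒩_{k,12} Θ₂ 𝒩_{k,12}ᵀ) = −X₁ X₁ᵀ`,
because `Θ` is block diagonal. So the gap in the truncated inequality is exactly the coupling term
`γ⁻² ∑ₖ 𝒩_{k,12} Θ₂ 𝒩_{k,12}ᵀ`, which is positive semidefinite since `Θ₂` is.
-/

def generalizedLyapunov {ι n α : Type*} [Fintype ι] [Fintype n] [CommRing α]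
    (A : Matrix n n α) (N : ι → Matrix n n α) (c : α) (Θ : Matrix n n α) : Matrix n n α :=
  A * Θ + Θ * Aᵀ + c • ∑ k, N k * Θ * (N k)ᵀ

namespace Matrix

variable {ι l m n o α : Type*}

lemma toBlocks₁₁_neg [Neg α] (M : Matrix (n ⊕ o) (l ⊕ m) α) : (-M).toBlocks₁₁ = -M.toBlocks₁₁ :=
  rfl

variable [CommRing α]

lemma toBlocks₁₁_fromRows_mul_transpose [Fintype l] (X : Matrix n l α) (Y : Matrix o l α) :
    (fromRows X Y * (fromRows X Y)ᵀ).toBlocks₁₁ = X * Xᵀ := by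
  rw [transpose_fromRows, fromRows_mul_fromCols, toBlocks_fromBlocks₁₁]

lemma toBlocks₁₁_generalizedLyapunov_fromBlocks [Fintype ι] [Fintype n] [Fintype o]
    (A : Matrix n n α) (B : Matrix n o α) (C : Matrix o n α) (D : Matrix o o α)
    (N₁₁ : ι → Matrix n n α) (N₁₂ : ι → Matrix n o α) (N₂₁ : ι → Matrix o n α)
    (N₂₂ : ι → Matrix o o α) (c : α) (P : Matrix n n α) (Q : Matrix o o α) :
    (generalizedLyapunov (fromBlocks A B C D) (fun k ↦ fromBlocks (N₁₁ k) (N₁₂ k) (N₂₁ k) (N₂₂ k))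
        c (fromBlocks P 0 0 Q)).toBlocks₁₁
      = generalizedLyapunov A N₁₁ c P + c • ∑ k, N₁₂ k * Q * (N₁₂ k)ᵀ := by
  ext i j
  simp only [generalizedLyapunov, toBlocks₁₁, fromBlocks_transpose, fromBlocks_multiply,
    Matrix.mul_zero, Matrix.zero_mul, add_zero, zero_add, of_apply, add_apply, smul_apply,
    smul_eq_mul, fromBlocks_apply₁₁, sum_apply, Finset.sum_add_distrib]
  ring

end Matrix

lemma Matrix.PosSemidef.smul_sum_mul_mul_transpose {ι m n : Type*} [Fintype ι] [Fintype m]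
    [Fintype n] {Q : Matrix n n ℝ} (hQ : Q.PosSemidef) (N : ι → Matrix m n ℝ) {c : ℝ}
    (hc : 0 ≤ c) : (c • ∑ k, N k * Q * (N k)ᵀ).PosSemidef := by
  refine .smul (posSemidef_sum _ fun k _ ↦ ?_) hc
  simpa only [conjTranspose_eq_transpose_of_trivial] using hQ.mul_mul_conjTranspose_same (N k)

theorem truncated_lyapunov_inequality
    {r s q m : ℕ} (γ : ℝ)
    (A11 : Matrix (Fin r) (Fin r) ℝ) (A12 : Matrix (Fin r) (Fin s) ℝ)
    (A21 : Matrix (Fin s) (Fin r) ℝ) (A22 : Matrix (Fin s) (Fin s) ℝ)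
    (N11 : Fin m → Matrix (Fin r) (Fin r) ℝ) (N12 : Fin m → Matrix (Fin r) (Fin s) ℝ)
    (N21 : Fin m → Matrix (Fin s) (Fin r) ℝ) (N22 : Fin m → Matrix (Fin s) (Fin s) ℝ)
    (X1 : Matrix (Fin r) (Fin q) ℝ) (X2 : Matrix (Fin s) (Fin q) ℝ)
    (Θ1 : Matrix (Fin r) (Fin r) ℝ) (Θ2 : Matrix (Fin s) (Fin s) ℝ)
    (hΘ2 : Θ2.PosSemidef)
    (heq : Matrix.fromBlocks A11 A12 A21 A22 * Matrix.fromBlocks Θ1 0 0 Θ2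
        + Matrix.fromBlocks Θ1 0 0 Θ2 * (Matrix.fromBlocks A11 A12 A21 A22)ᵀ
        + (γ ^ 2)⁻¹ • ∑ k,
            Matrix.fromBlocks (N11 k) (N12 k) (N21 k) (N22 k) * Matrix.fromBlocks Θ1 0 0 Θ2
              * (Matrix.fromBlocks (N11 k) (N12 k) (N21 k) (N22 k))ᵀ
      = -(Matrix.fromRows X1 X2 * (Matrix.fromRows X1 X2)ᵀ)) :
    (-(X1 * X1ᵀ)
      - (A11 * Θ1 + Θ1 * A11ᵀ + (γ ^ 2)⁻¹ • ∑ k, N11 k * Θ1 * (N11 k)ᵀ)).PosSemidef := by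
  change generalizedLyapunov _ (fun k ↦ fromBlocks (N11 k) (N12 k) (N21 k) (N22 k)) _ _ = _ at heq
  have hblock := congrArg toBlocks₁₁ heq
  rw [toBlocks₁₁_generalizedLyapunov_fromBlocks, toBlocks₁₁_neg,
    toBlocks₁₁_fromRows_mul_transpose] at hblock
  rw [← hblock, generalizedLyapunov, add_sub_cancel_left]
  exact hΘ2.smul_sum_mul_mul_transpose N12 (by positivity)
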